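/- For n ≥ 4, let M be a perfect matching of FQ_n contained in M_1 ∪ M_2 with M ≠ M_1 and M ≠ M_2, where M_1 is the set of last-coordinate hypercube edges and M_2 is the set of complement edges. Then FQ_n − M is not isomorphic to Q_n. -/

import Mathlib

/-!
Write `A` for the set of vertices `x` whose complement edge `{x, x̄}` lies in `M`. Every vertex is
matched either along its complement edge or along direction `j = n - 1`, so `A` is closed under
flipping coordinate `j`; as `M` is neither `M₁` nor `M₂`, `A` is a proper nonempty subset. Walking
in the hypercube from outside `A` into `A` yields a vertex `x ∉ A` with `y := x + eᵢ ∈ A`, `i ≠ j`.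
Both `x x̄` and `x y` are edges of `FQ n - M`. In `Q n` every path of length two lies on a
4-cycle, but in `FQ n - M` the vertices `x̄` and `y` have no common neighbour besides `x`: they are
at Hamming distance `n - 1 ≥ 3`, and the only other candidate, `ȳ`, is joined to `y` by an edge
of `M`.
-/
open SimpleGraph

def cmpl {n : ℕ} (x : Fin n → Bool) : Fin n → Bool := fun i => !x i

/-- The `n`-dimensional hypercube on vertex set `{0,1}^n`. -/
def Q (n : ℕ) : SimpleGraph (Fin n → Bool) where
  Adj x y := hammingDist x y = 1
  symm := ⟨fun x y h => (hammingDist_comm y x).trans h⟩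
  loopless := ⟨fun x h => by simp [hammingDist_self] at h⟩

/-- The folded hypercube: `Q n` plus all complement edges. -/
def FQ (n : ℕ) : SimpleGraph (Fin n → Bool) where
  Adj x y := hammingDist x y = 1 ∨ (x ≠ y ∧ y = cmpl x)
  symm := by
    constructor
    intro x y h
    rcases h with h | ⟨hne, he⟩
    · exact Or.inl ((hammingDist_comm y x).trans h)
    · refine Or.inr ⟨hne.symm, ?_⟩
      subst he; funext i; simp [cmpl]
  loopless := by
    constructor
    intro x h
    rcases h with h | ⟨hne, _⟩
    · simp [hammingDist_self] at h
    · exact hne rfl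

/-- The set of hypercube edges in coordinate direction `j`. -/
def Mdir (n : ℕ) (j : Fin n) : Set (Sym2 (Fin n → Bool)) :=
  {e | ∃ x, e = s(x, Function.update x j (!x j))}

/-- The set of complement edges. -/
def M2 (n : ℕ) : Set (Sym2 (Fin n → Bool)) := {e | ∃ x, e = s(x, cmpl x)}

/-- `M` is a perfect matching of `G`: a set of edges of `G` such that every
vertex lies in exactly one edge of `M`. -/
def IsPerfectMatchingSet {V : Type*} (G : SimpleGraph V) (M : Set (Sym2 V)) : Prop :=
  M ⊆ G.edgeSet ∧ ∀ v : V, ∃! e, e ∈ M ∧ v ∈ e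

namespace SimpleGraph

variable {V W : Type*}

def SquareCompletable (G : SimpleGraph V) : Prop :=
  ∀ ⦃u v w⦄, G.Adj u v → G.Adj u w → v ≠ w → ∃ t, t ≠ u ∧ G.Adj v t ∧ G.Adj w t

theorem SquareCompletable.of_iso {G : SimpleGraph V} {H : SimpleGraph W} (φ : G ≃g H)
    (hH : H.SquareCompletable) : G.SquareCompletable := by
  intro u v w huv huw hvw
  obtain ⟨t, htu, hvt, hwt⟩ :=
    hH (φ.map_adj_iff.2 huv) (φ.map_adj_iff.2 huw) (φ.injective.ne hvw)
  refine ⟨φ.symm t, ?_, ?_, ?_⟩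
  · rintro rfl
    exact htu (φ.apply_symm_apply t).symm
  · simpa using φ.symm.map_adj_iff.2 hvt
  · simpa using φ.symm.map_adj_iff.2 hwt

end SimpleGraph

namespace IsPerfectMatchingSet

variable {V : Type*} {G : SimpleGraph V} {M : Set (Sym2 V)}

theorem eq_of_mk_mem (hM : IsPerfectMatchingSet G M) {x u v : V} (hu : s(x, u) ∈ M)
    (hv : s(x, v) ∈ M) : u = v :=
  Sym2.congr_right.1 <| (hM.2 x).unique ⟨hu, Sym2.mem_mk_left _ _⟩ ⟨hv, Sym2.mem_mk_left _ _⟩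

theorem eq_of_subset (hM : IsPerfectMatchingSet G M) {N : Set (Sym2 V)}
    (hN : ∀ v, ∃ e ∈ N, v ∈ e) (hNM : N ⊆ M) : M = N := by
  refine Set.Subset.antisymm ?_ hNM
  intro e he
  obtain ⟨v, hv⟩ : ∃ v, v ∈ e := ⟨_, Sym2.out_fst_mem e⟩
  obtain ⟨f, hfN, hvf⟩ := hN v
  rwa [(hM.2 v).unique ⟨he, hv⟩ ⟨hNM hfN, hvf⟩]

end IsPerfectMatchingSet

variable {n : ℕ}

def flipBit (x : Fin n → Bool) (i : Fin n) : Fin n → Bool := Function.update x i (!x i)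

@[simp] theorem flipBit_apply_self (x : Fin n → Bool) (i : Fin n) : flipBit x i i = !x i := by
  simp [flipBit]

@[simp] theorem flipBit_apply_of_ne (x : Fin n → Bool) {i k : Fin n} (h : k ≠ i) :
    flipBit x i k = x k := by
  simp [flipBit, h]

@[simp] theorem flipBit_flipBit (x : Fin n → Bool) (i : Fin n) : flipBit (flipBit x i) i = x := by
  funext k
  by_cases h : k = i <;> simp [h]

theorem flipBit_comm (x : Fin n → Bool) (i j : Fin n) :
    flipBit (flipBit x i) j = flipBit (flipBit x j) i := by
  funext k
  by_cases hi : k = i <;> by_cases hj : k = j <;> simp_all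

@[simp] theorem cmpl_cmpl (x : Fin n → Bool) : cmpl (cmpl x) = x := by
  funext i
  simp [cmpl]

theorem self_ne_cmpl (hn : 0 < n) (x : Fin n → Bool) : x ≠ cmpl x := fun h => by
  simpa [cmpl] using congrFun h ⟨0, hn⟩

theorem cmpl_ne_flipBit (hn : 2 ≤ n) (x : Fin n → Bool) (i : Fin n) : cmpl x ≠ flipBit x i := by
  obtain ⟨k, hk⟩ := Fintype.exists_ne_of_one_lt_card (by rw [Fintype.card_fin]; omega) i
  intro h
  simpa [cmpl, hk] using congrFun h k

theorem hammingDist_flipBit (x : Fin n → Bool) (i : Fin n) : hammingDist x (flipBit x i) = 1 := by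
  rw [hammingDist, Finset.card_eq_one]
  refine ⟨i, Finset.ext fun k => ?_⟩
  by_cases h : k = i <;> simp [h]

theorem hammingDist_eq_one_iff {x y : Fin n → Bool} :
    hammingDist x y = 1 ↔ ∃ i, y = flipBit x i := by
  refine ⟨fun h => ?_, fun ⟨i, hi⟩ => hi ▸ hammingDist_flipBit x i⟩
  obtain ⟨i, hi⟩ := Finset.card_eq_one.1 h
  refine ⟨i, funext fun k => ?_⟩
  have hk := Finset.ext_iff.1 hi k
  by_cases h : k = i
  · subst h
    simp only [Finset.mem_filter, Finset.mem_univ, true_and, Finset.mem_singleton, iff_true] at hk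
    rw [flipBit_apply_self, Bool.eq_not_iff]
    exact Ne.symm hk
  · simp only [Finset.mem_filter, Finset.mem_univ, true_and, Finset.mem_singleton, h,
      iff_false, not_not] at hk
    simp [h, hk]

theorem hammingDist_flipBit_lt {x z : Fin n → Bool} {i : Fin n} (h : x i ≠ z i) :
    hammingDist (flipBit x i) z < hammingDist x z := by
  have herase : Finset.univ.filter (fun k => flipBit x i k ≠ z k)
      = (Finset.univ.filter fun k => x k ≠ z k).erase i := by
    ext k
    by_cases hk : k = i
    · subst hk; simpa using h
    · simp [hk]
  rw [hammingDist, hammingDist, herase]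
  exact Finset.card_erase_lt_of_mem (by simpa using h)

theorem hammingDist_cmpl_flipBit (x : Fin n → Bool) (i : Fin n) :
    hammingDist (cmpl x) (flipBit x i) = n - 1 := by
  have : Finset.univ.filter (fun k => cmpl x k ≠ flipBit x i k) = Finset.univ.erase i := by
    ext k
    by_cases hk : k = i <;> simp [cmpl, hk]
  rw [hammingDist, this, Finset.card_erase_of_mem (Finset.mem_univ i), Finset.card_fin]

theorem exists_flipBit_boundary (P : (Fin n → Bool) → Prop) {x z : Fin n → Bool} (hx : ¬P x)
    (hz : P z) : ∃ u i, ¬P u ∧ P (flipBit u i) := by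
  induction h : hammingDist x z using Nat.strong_induction_on generalizing x with
  | _ d ih =>
    obtain ⟨i, hi⟩ := Function.ne_iff.1 fun h : x = z => hx (h ▸ hz)
    by_cases hflip : P (flipBit x i)
    · exact ⟨x, i, hx, hflip⟩
    · exact ih _ (h ▸ hammingDist_flipBit_lt hi) hflip rfl

theorem squareCompletable_Q : (Q n).SquareCompletable := by
  intro u v w huv huw hvw
  obtain ⟨a, rfl⟩ := hammingDist_eq_one_iff.1 huv
  obtain ⟨b, rfl⟩ := hammingDist_eq_one_iff.1 huw
  have hab : a ≠ b := by rintro rfl; exact hvw rfl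
  refine ⟨flipBit (flipBit u a) b, fun h => ?_, hammingDist_flipBit _ _, ?_⟩
  · simpa [hab.symm] using congrFun h b
  · rw [flipBit_comm]
    exact hammingDist_flipBit _ _

theorem FQ_adj_cmpl (hn : 0 < n) (x : Fin n → Bool) : (FQ n).Adj x (cmpl x) :=
  Or.inr ⟨self_ne_cmpl hn x, rfl⟩

theorem FQ_adj_flipBit (x : Fin n → Bool) (i : Fin n) : (FQ n).Adj x (flipBit x i) :=
  Or.inl (hammingDist_flipBit x i)

theorem eq_of_FQ_adj_cmpl_of_FQ_adj_flipBit (hn : 4 ≤ n) {x t : Fin n → Bool} {i : Fin n}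
    (h₁ : (FQ n).Adj (cmpl x) t) (h₂ : (FQ n).Adj (flipBit x i) t) :
    t = x ∨ t = cmpl (flipBit x i) := by
  rcases h₁ with h₁ | ⟨-, rfl⟩
  · rcases h₂ with h₂ | ⟨-, rfl⟩
    · have := hammingDist_triangle (cmpl x) t (flipBit x i)
      rw [hammingDist_cmpl_flipBit, hammingDist_comm t, h₁, h₂] at this
      omega
    · exact Or.inr rfl
  · exact Or.inl (cmpl_cmpl x)

theorem mk_mem_Mdir_iff {j : Fin n} {u v : Fin n → Bool} : s(u, v) ∈ Mdir n j ↔ v = flipBit u j := by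
  refine ⟨fun ⟨a, ha⟩ => ?_, fun h => ⟨u, h ▸ rfl⟩⟩
  rcases Sym2.eq_iff.1 ha with ⟨rfl, rfl⟩ | ⟨rfl, rfl⟩
  · rfl
  · exact (flipBit_flipBit v j).symm

theorem mk_mem_M2_iff {u v : Fin n → Bool} : s(u, v) ∈ M2 n ↔ v = cmpl u := by
  refine ⟨fun ⟨a, ha⟩ => ?_, fun h => ⟨u, h ▸ rfl⟩⟩
  rcases Sym2.eq_iff.1 ha with ⟨rfl, rfl⟩ | ⟨rfl, rfl⟩
  · rfl
  · exact (cmpl_cmpl v).symm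

theorem mk_flipBit_notMem_Mdir_union_M2 (hn : 2 ≤ n) {i j : Fin n} (hij : i ≠ j)
    (x : Fin n → Bool) : s(x, flipBit x i) ∉ Mdir n j ∪ M2 n := by
  rintro (h | h)
  · simpa [hij] using congrFun (mk_mem_Mdir_iff.1 h) i
  · exact cmpl_ne_flipBit hn x i (mk_mem_M2_iff.1 h).symm

theorem not_squareCompletable_FQ_deleteEdges (hn : 4 ≤ n) {M : Set (Sym2 (Fin n → Bool))}
    {x : Fin n → Bool} {i : Fin n} (hx : s(x, cmpl x) ∉ M) (hxi : s(x, flipBit x i) ∉ M)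
    (hy : s(flipBit x i, cmpl (flipBit x i)) ∈ M) : ¬((FQ n).deleteEdges M).SquareCompletable := by
  intro hsq
  obtain ⟨t, htx, ht₁, ht₂⟩ := hsq (v := cmpl x) (w := flipBit x i)
    (deleteEdges_adj.2 ⟨FQ_adj_cmpl (by omega) x, hx⟩)
    (deleteEdges_adj.2 ⟨FQ_adj_flipBit x i, hxi⟩) (cmpl_ne_flipBit (by omega) x i)
  rw [deleteEdges_adj] at ht₁ ht₂
  rcases eq_of_FQ_adj_cmpl_of_FQ_adj_flipBit hn ht₁.1 ht₂.1 with rfl | rfl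
  · exact htx rfl
  · exact ht₂.2 hy

theorem exists_mk_cmpl_notMem {M : Set (Sym2 (Fin n → Bool))} (hM : IsPerfectMatchingSet (FQ n) M)
    (h₂ : M ≠ M2 n) : ∃ x, s(x, cmpl x) ∉ M := by
  by_contra! h
  refine h₂ (hM.eq_of_subset (fun v => ⟨_, ⟨v, rfl⟩, Sym2.mem_mk_left _ _⟩) ?_)
  rintro e ⟨x, rfl⟩
  exact h x

section MatchingInDirectionAndComplement

variable {M : Set (Sym2 (Fin n → Bool))} {j : Fin n} (hM : IsPerfectMatchingSet (FQ n) M)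
  (hsub : M ⊆ Mdir n j ∪ M2 n)
include hM hsub

theorem mk_cmpl_mem_or_mk_flipBit_mem (x : Fin n → Bool) :
    s(x, cmpl x) ∈ M ∨ s(x, flipBit x j) ∈ M := by
  obtain ⟨e, ⟨he, hxe⟩, -⟩ := hM.2 x
  obtain ⟨u, rfl⟩ := Sym2.mem_iff_exists.1 hxe
  rcases hsub he with h | h
  · exact Or.inr (mk_mem_Mdir_iff.1 h ▸ he)
  · exact Or.inl (mk_mem_M2_iff.1 h ▸ he)

theorem mk_cmpl_flipBit_mem (hn : 2 ≤ n) {x : Fin n → Bool} (hx : s(x, cmpl x) ∈ M) :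
    s(flipBit x j, cmpl (flipBit x j)) ∈ M := by
  refine (mk_cmpl_mem_or_mk_flipBit_mem hM hsub _).resolve_right fun h => ?_
  rw [flipBit_flipBit, Sym2.eq_swap] at h
  exact cmpl_ne_flipBit hn x j (hM.eq_of_mk_mem hx h)

theorem exists_mk_cmpl_mem (h₁ : M ≠ Mdir n j) : ∃ x, s(x, cmpl x) ∈ M := by
  by_contra! h
  refine h₁ (hM.eq_of_subset (fun v => ⟨_, ⟨v, rfl⟩, Sym2.mem_mk_left _ _⟩) ?_)
  rintro e ⟨x, rfl⟩
  exact (mk_cmpl_mem_or_mk_flipBit_mem hM hsub x).resolve_left (h x)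

end MatchingInDirectionAndComplement

/-- A perfect matching `M ⊆ M₁ ∪ M₂` of `FQ n` with `M ≠ M₁` and `M ≠ M₂` is non-removable. -/
theorem stmt8 (n : ℕ) (hn : 4 ≤ n) (M : Set (Sym2 (Fin n → Bool)))
    (hM : IsPerfectMatchingSet (FQ n) M)
    (hsub : M ⊆ Mdir n ⟨n - 1, by omega⟩ ∪ M2 n)
    (h1 : M ≠ Mdir n ⟨n - 1, by omega⟩) (h2 : M ≠ M2 n) :
    ¬ Nonempty ((FQ n).deleteEdges M ≃g Q n) := by
  rintro ⟨φ⟩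
  obtain ⟨x₀, hx₀⟩ := exists_mk_cmpl_notMem hM h2
  obtain ⟨z₀, hz₀⟩ := exists_mk_cmpl_mem hM hsub h1
  obtain ⟨x, i, hx, hy⟩ := exists_flipBit_boundary (fun x => s(x, cmpl x) ∈ M) hx₀ hz₀
  have hij : i ≠ ⟨n - 1, by omega⟩ := by
    rintro rfl
    exact hx (by simpa using mk_cmpl_flipBit_mem hM hsub (by omega) hy)
  exact not_squareCompletable_FQ_deleteEdges hn hx
    (fun h => mk_flipBit_notMem_Mdir_union_M2 (by omega) hij x (hsub h)) hy
    (squareCompletable_Q.of_iso φ)
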